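/- In Z[α^{±1}, β^{±1}], the ideal ⟨1 - α^{a}β^{b}, 1 - α^{c}β^{d}⟩ equals ⟨1 - α, 1 - β⟩ if and only if |ad - bc| = 1. -/

import Mathlib

/-- The Laurent monomial `x^w` in `ℤ[x₁^{±1},…,x_s^{±1}]`, modelled as the
group algebra `AddMonoidAlgebra ℤ (Fin s → ℤ)`. -/
noncomputable def Lmon (s : ℕ) (w : Fin s → ℤ) : AddMonoidAlgebra ℤ (Fin s → ℤ) :=
  AddMonoidAlgebra.single w 1

lemma Lmon_zero : Lmon 2 0 = 1 := rfl

lemma Lmon_mul (w u : Fin 2 → ℤ) : Lmon 2 w * Lmon 2 u = Lmon 2 (w + u) := by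
  simp [Lmon, AddMonoidAlgebra.single_mul_single]

lemma one_sub_mem (u v w : Fin 2 → ℤ) (hw : w ∈ AddSubgroup.closure {u, v}) :
    1 - Lmon 2 w ∈ Ideal.span {1 - Lmon 2 u, 1 - Lmon 2 v} := by
  induction hw using AddSubgroup.closure_induction with
  | mem x hx =>
    rcases hx with rfl | rfl
    · exact Ideal.subset_span (Or.inl rfl)
    · exact Ideal.subset_span (Or.inr rfl)
  | zero => simp [Lmon_zero]
  | add x y hx hy ihx ihy =>
    have : 1 - Lmon 2 (x + y) = (1 - Lmon 2 x) + Lmon 2 x * (1 - Lmon 2 y) := by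
      rw [mul_sub, mul_one, Lmon_mul]; ring
    rw [this]
    exact add_mem ihx (Ideal.mul_mem_left _ _ ihy)
  | neg x hx ihx =>
    have : 1 - Lmon 2 (-x) = -Lmon 2 (-x) * (1 - Lmon 2 x) := by
      rw [neg_mul, mul_sub, mul_one, Lmon_mul, neg_add_cancel, Lmon_zero]; ring
    rw [this]
    exact Ideal.mul_mem_left _ _ ihx

lemma mem_closure_of_mem (u v w : Fin 2 → ℤ)
    (h : 1 - Lmon 2 w ∈ Ideal.span {1 - Lmon 2 u, 1 - Lmon 2 v}) :
    w ∈ AddSubgroup.closure {u, v} := by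
  set H := AddSubgroup.closure ({u, v} : Set (Fin 2 → ℤ))
  let φ := AddMonoidAlgebra.mapDomainRingHom ℤ (QuotientAddGroup.mk' H)
  have key : ∀ x : Fin 2 → ℤ, φ (Lmon 2 x) = AddMonoidAlgebra.single (QuotientAddGroup.mk' H x) (1:ℤ) := by
    intro x
    simp [φ, Lmon, AddMonoidAlgebra.mapDomainRingHom_apply, Finsupp.mapDomain_single]
  have hker : Ideal.span {1 - Lmon 2 u, 1 - Lmon 2 v} ≤ RingHom.ker φ := by
    rw [Ideal.span_le]
    rintro x (rfl | rfl)
    · rw [SetLike.mem_coe, RingHom.mem_ker, map_sub, map_one, key,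
        show (QuotientAddGroup.mk' H) u = 0 from (QuotientAddGroup.eq_zero_iff u).2
          (AddSubgroup.subset_closure (by simp))]
      simp [AddMonoidAlgebra.one_def]
    · rw [SetLike.mem_coe, RingHom.mem_ker, map_sub, map_one, key,
        show (QuotientAddGroup.mk' H) v = 0 from (QuotientAddGroup.eq_zero_iff v).2
          (AddSubgroup.subset_closure (by simp))]
      simp [AddMonoidAlgebra.one_def]
  have h0 : φ (1 - Lmon 2 w) = 0 := hker h
  rw [map_sub, map_one, key, sub_eq_zero] at h0
  have : (0 : (Fin 2 → ℤ) ⧸ H) = QuotientAddGroup.mk' H w := by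
    have := h0
    rw [show (1 : AddMonoidAlgebra ℤ ((Fin 2 → ℤ) ⧸ H)) = AddMonoidAlgebra.single 0 1 from rfl] at this
    exact AddMonoidAlgebra.single_left_injective one_ne_zero this
  exact (QuotientAddGroup.eq_zero_iff _).1 this.symm

/-- In `ℤ[α^{±1},β^{±1}]`, the ideal `⟨1 - α^a β^b, 1 - α^c β^d⟩` equals
`⟨1 - α, 1 - β⟩` if and only if `|ad - bc| = 1`. -/
theorem two_euler_classes_span_iff_det (a b c d : ℤ) :
    Ideal.span {1 - Lmon 2 ![a, b], 1 - Lmon 2 ![c, d]} =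
      Ideal.span {1 - Lmon 2 (Pi.single 0 1), 1 - Lmon 2 (Pi.single 1 1)} ↔
    (a * d - b * c).natAbs = 1 := by
  set u : Fin 2 → ℤ := ![a, b]
  set v : Fin 2 → ℤ := ![c, d]
  set e₀ : Fin 2 → ℤ := Pi.single 0 1
  set e₁ : Fin 2 → ℤ := Pi.single 1 1
  constructor
  · intro h
    have h0 : e₀ ∈ AddSubgroup.closure ({u, v} : Set (Fin 2 → ℤ)) := by
      apply mem_closure_of_mem
      rw [h]
      exact Ideal.subset_span (Or.inl rfl)
    have h1 : e₁ ∈ AddSubgroup.closure ({u, v} : Set (Fin 2 → ℤ)) := by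
      apply mem_closure_of_mem
      rw [h]
      exact Ideal.subset_span (Or.inr rfl)
    rw [AddSubgroup.mem_closure_pair] at h0 h1
    obtain ⟨m, n, hmn⟩ := h0
    obtain ⟨p, q, hpq⟩ := h1
    have E1 := congrFun hmn 0
    have E2 := congrFun hmn 1
    have E3 := congrFun hpq 0
    have E4 := congrFun hpq 1
    simp [u, v, e₀, e₁, Pi.single_apply] at E1 E2 E3 E4
    have hu : (m*q - n*p) * (a*d - b*c) = 1 := by
      linear_combination (p*b + q*d) * E1 - (p*a + q*c) * E2 + E4
    exact Int.isUnit_iff_natAbs_eq.1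
      (IsUnit.of_mul_eq_one _ (show (a*d - b*c) * (m*q - n*p) = 1 by linear_combination hu))
  · intro h
    have hde : a*d - b*c = 1 ∨ a*d - b*c = -1 := by
      rcases Int.natAbs_eq (a*d - b*c) with he | he <;> rw [h] at he <;> simp [he]
    apply le_antisymm
    · rw [Ideal.span_le]
      rintro x (rfl | rfl) <;> apply one_sub_mem <;> rw [AddSubgroup.mem_closure_pair]
      · exact ⟨a, b, by funext i; fin_cases i <;> simp [u, v, e₀, e₁, Pi.single_apply]⟩
      · exact ⟨c, d, by funext i; fin_cases i <;> simp [u, v, e₀, e₁, Pi.single_apply]⟩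
    · rw [Ideal.span_le]
      obtain hε | hε := hde
      · rintro x (rfl | rfl) <;> apply one_sub_mem <;> rw [AddSubgroup.mem_closure_pair]
        · exact ⟨d, -b, by funext i; fin_cases i <;> simp [u, v, e₀, e₁, Pi.single_apply] <;> linarith⟩
        · exact ⟨-c, a, by funext i; fin_cases i <;> simp [u, v, e₀, e₁, Pi.single_apply] <;> linarith⟩
      · rintro x (rfl | rfl) <;> apply one_sub_mem <;> rw [AddSubgroup.mem_closure_pair]
        · exact ⟨-d, b, by funext i; fin_cases i <;> simp [u, v, e₀, e₁, Pi.single_apply] <;> linarith⟩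
        · exact ⟨c, -a, by funext i; fin_cases i <;> simp [u, v, e₀, e₁, Pi.single_apply] <;> linarith⟩
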